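/- Suppose conditions A1 and A2 hold and the target density f is bounded away from 0 and ∞ on compact sets. Then every nonempty compact set C ⊆ ℝ^d is small for the Metropolis–Hastings kernel P: with ε := inf_{x,y ∈ C} q(x,y) > 0 and u := sup_{x ∈ C} f(x) < ∞, one has P(x,B) ≥ (ε/u)·F(B) for all x ∈ C and all measurable B ⊆ C, where F is the probability measure with density f. -/

import Mathlib

/-!
Under A1 the Gaussian proposal density is bounded below uniformly on `C × C`: `G x ≤ G₂` bounds
the eigenvalues of `G x`, hence `det (G x)`, from above, and `G₁ ≤ G x` gives
`vᵀ (G x) v ≥ λ ‖v‖²` with `λ > 0` independent of `x`, hence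
`(y - c x)ᵀ (G x)⁻¹ (y - c x) ≤ ‖y - c x‖² / λ`, while A2 bounds `‖y - c x‖` on `C`.
With `ε ≤ q` on `C × C` and `f ≤ u` on `C`, the density of the accepted move is
`α q = min (q x y) (f y q y x / f x) ≥ (ε / u) f y` for `x, y ∈ C`; integrating over `B ⊆ C`
and dropping the rejection atom gives `P(x, B) ≥ (ε / u) F(B)`.
-/

open MeasureTheory Filter

noncomputable section

abbrev Ed (d : ℕ) := EuclideanSpace ℝ (Fin d)

variable {d : ℕ}

/-- The quadratic form `vᵀ M v`. -/
def quadForm (M : Matrix (Fin d) (Fin d) ℝ) (v : Ed d) : ℝ :=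
  ∑ i, ∑ j, v i * M i j * v j

/-- A matrix acting on a Euclidean vector. -/
def mvec (M : Matrix (Fin d) (Fin d) ℝ) (v : Ed d) : Ed d :=
  (WithLp.equiv 2 (Fin d → ℝ)).symm (M.mulVec (WithLp.equiv 2 (Fin d → ℝ) v))

/-- Gaussian proposal density with mean `c x` and covariance `h • G x`. -/
def mhq (h : ℝ) (c : Ed d → Ed d) (G : Ed d → Matrix (Fin d) (Fin d) ℝ)
    (x y : Ed d) : ℝ :=
  (2 * Real.pi * h) ^ (-(d : ℝ) / 2) * (G x).det ^ (-(1 : ℝ) / 2) *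
    Real.exp (-quadForm (G x)⁻¹ (y - c x) / (2 * h))

/-- Metropolis–Hastings acceptance probability. -/
def mhAccept (f : Ed d → ℝ) (q : Ed d → Ed d → ℝ) (x y : Ed d) : ℝ :=
  min 1 (f y * q y x / (f x * q x y))

/-- Metropolis–Hastings rejection probability. -/
def mhRej (f : Ed d → ℝ) (q : Ed d → Ed d → ℝ) (x : Ed d) : ℝ :=
  1 - ∫ y, mhAccept f q x y * q x y

/-- The Metropolis–Hastings transition kernel. -/
def mhKernel (f : Ed d → ℝ) (q : Ed d → Ed d → ℝ) (x : Ed d) : Measure (Ed d) :=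
  volume.withDensity (fun y => ENNReal.ofReal (mhAccept f q x y * q x y)) +
    ENNReal.ofReal (mhRej f q x) • Measure.dirac x

/-- The `n`-step kernel. -/
def iterKernel (P : Ed d → Measure (Ed d)) : ℕ → Ed d → Measure (Ed d)
  | 0, x => Measure.dirac x
  | n + 1, x => (P x).bind (iterKernel P n)

/-- The target probability measure with density `f`. -/
def targetMeasure (f : Ed d → ℝ) : Measure (Ed d) :=
  volume.withDensity fun x => ENNReal.ofReal (f x)

/-- Geometric ergodicity of the chain `P` with target `F`. -/
def GeomErgodic (P : Ed d → Measure (Ed d)) (F : Measure (Ed d)) : Prop :=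
  ∃ (L : Ed d → ℝ) (ρ : ℝ), (∀ x, 0 ≤ L x) ∧ 0 < ρ ∧ ρ < 1 ∧
    ∀ (n : ℕ) (x : Ed d) (A : Set (Ed d)), MeasurableSet A →
      |(iterKernel P n x A).toReal - (F A).toReal| ≤ L x * ρ ^ n

/-- Potential rejection region. -/
def rejSet (f : Ed d → ℝ) (q : Ed d → Ed d → ℝ) (x : Ed d) : Set (Ed d) :=
  {y | f y * q y x < f x * q x y}

/-- The filter of `‖x‖ → ∞`. -/
def normAtTop (d : ℕ) : Filter (Ed d) := Filter.comap (fun x => ‖x‖) Filter.atTop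

/-- The constant `C₁`. -/
def C1const (f : Ed d → ℝ) (q : Ed d → Ed d → ℝ) : ℝ :=
  limsup (fun x => ∫ y in rejSet f q x, q x y * (1 - mhAccept f q x y)) (normAtTop d)

/-- The constant `C₂(s)`. -/
def C2const (d : ℕ) (h s : ℝ) (G₁ G₂ : Matrix (Fin d) (Fin d) ℝ) : ℝ :=
  h ^ (-(d : ℝ) / 2) * (Real.pi / 2) ^ (((d : ℝ) - 2) / 2) *
    (G₂.det / G₁.det) ^ ((1 : ℝ) / 2) * Real.exp (h * s ^ 2 / 2) *
    ∫ r in Set.Ioi (0 : ℝ), Real.exp (-(r - h * s) ^ 2 / (2 * h)) * r ^ ((d : ℝ) - 1)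

/-- Loewner order. -/
def LoewnerLE (A B : Matrix (Fin d) (Fin d) ℝ) : Prop := (B - A).PosSemidef

/-- A2 : bounded on bounded sets. -/
def BddOnBounded (c : Ed d → Ed d) : Prop :=
  ∀ M : ℝ, ∃ K : ℝ, ∀ x : Ed d, ‖x‖ ≤ M → ‖c x‖ ≤ K

/-- `f` is bounded away from `0` and `∞` on compact sets. -/
def BddAwayOnCompacts (f : Ed d → ℝ) : Prop :=
  ∀ K : Set (Ed d), IsCompact K → ∃ a b : ℝ, 0 < a ∧ ∀ x ∈ K, a ≤ f x ∧ f x ≤ b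

section QuadForm

open Matrix

lemma quadForm_eq_dotProduct (M : Matrix (Fin d) (Fin d) ℝ) (v : Ed d) :
    quadForm M v = v ⬝ᵥ M *ᵥ v := by
  simp [quadForm, dotProduct, Matrix.mulVec, Finset.mul_sum, mul_assoc]

lemma quadForm_smul (M : Matrix (Fin d) (Fin d) ℝ) (a : ℝ) (v : Ed d) :
    quadForm M (a • v) = a ^ 2 * quadForm M v := by
  simp only [quadForm, PiLp.smul_apply, smul_eq_mul, Finset.mul_sum]
  refine Finset.sum_congr rfl fun i _ => Finset.sum_congr rfl fun j _ => ?_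
  ring

lemma continuous_quadForm (M : Matrix (Fin d) (Fin d) ℝ) : Continuous (quadForm M) := by
  unfold quadForm
  fun_prop

lemma LoewnerLE.quadForm_le {A B : Matrix (Fin d) (Fin d) ℝ} (hAB : LoewnerLE A B) (v : Ed d) :
    quadForm A v ≤ quadForm B v := by
  have := hAB.dotProduct_mulVec_nonneg v
  simp only [star_trivial, Matrix.sub_mulVec, dotProduct_sub] at this
  rw [quadForm_eq_dotProduct, quadForm_eq_dotProduct]
  linarith

lemma quadForm_le_sum_abs_mul_norm_sq (M : Matrix (Fin d) (Fin d) ℝ) (v : Ed d) :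
    quadForm M v ≤ (∑ i, ∑ j, |M i j|) * ‖v‖ ^ 2 := by
  simp only [quadForm, Finset.sum_mul]
  refine Finset.sum_le_sum fun i _ => Finset.sum_le_sum fun j _ => ?_
  calc v i * M i j * v j ≤ |M i j| * (|v i| * |v j|) := by
        rw [mul_comm (v i), mul_assoc, ← abs_mul, ← abs_mul]
        exact le_abs_self _
    _ ≤ |M i j| * ‖v‖ ^ 2 := by
        rw [sq]
        gcongr <;> exact PiLp.norm_apply_le v _

lemma Matrix.PosDef.exists_pos_mul_norm_sq_le_quadForm {M : Matrix (Fin d) (Fin d) ℝ}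
    (hM : M.PosDef) : ∃ lam > 0, ∀ v : Ed d, lam * ‖v‖ ^ 2 ≤ quadForm M v := by
  rcases subsingleton_or_nontrivial (Ed d) with hsub | hnt
  · exact ⟨1, one_pos, fun v => by simp [Subsingleton.elim v 0, quadForm]⟩
  obtain ⟨w₀, hw₀, hmin⟩ := (isCompact_sphere (0 : Ed d) 1).exists_isMinOn
    (NormedSpace.sphere_nonempty.mpr zero_le_one) (continuous_quadForm M).continuousOn
  have hw₀0 : w₀ ≠ 0 := ne_zero_of_mem_unit_sphere ⟨w₀, hw₀⟩
  have hpos : 0 < quadForm M w₀ := by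
    rw [quadForm_eq_dotProduct]
    simpa using hM.dotProduct_mulVec_pos (x := WithLp.ofLp w₀) (by simpa using hw₀0)
  refine ⟨quadForm M w₀, hpos, fun v => ?_⟩
  rcases eq_or_ne v 0 with rfl | hv
  · simp [quadForm]
  have hnv : 0 < ‖v‖ := norm_pos_iff.mpr hv
  have hw : ‖v‖⁻¹ • v ∈ Metric.sphere (0 : Ed d) 1 := by
    simp [norm_smul, hnv.ne']
  have hvw : v = ‖v‖ • (‖v‖⁻¹ • v) := by rw [smul_smul, mul_inv_cancel₀ hnv.ne', one_smul]
  calc quadForm M w₀ * ‖v‖ ^ 2 ≤ quadForm M (‖v‖⁻¹ • v) * ‖v‖ ^ 2 := by gcongr; exact hmin hw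
    _ = quadForm M v := by rw [mul_comm, ← quadForm_smul, ← hvw]

lemma quadForm_inv_le_norm_sq_div {M : Matrix (Fin d) (Fin d) ℝ} (hM : M.PosDef) {lam : ℝ}
    (hlam : 0 < lam) (hM_ge : ∀ v : Ed d, lam * ‖v‖ ^ 2 ≤ quadForm M v) (v : Ed d) :
    quadForm M⁻¹ v ≤ ‖v‖ ^ 2 / lam := by
  -- with `w = M⁻¹ v`: `lam ‖w‖² ≤ wᵀ M w = ⟪v, w⟫ ≤ ‖v‖ ‖w‖`, so `lam ‖w‖ ≤ ‖v‖`
  set w : Ed d := WithLp.toLp 2 (M⁻¹ *ᵥ v)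
  have hMw : M *ᵥ w = v := by
    simp [w, Matrix.mulVec_mulVec, Matrix.mul_nonsing_inv _ hM.det_pos.ne'.isUnit]
  have hvw : quadForm M⁻¹ v = inner ℝ v w := by
    rw [quadForm_eq_dotProduct, EuclideanSpace.inner_eq_star_dotProduct, dotProduct_comm]
    simp [w]
  have hwMw : quadForm M w = inner ℝ v w := by
    rw [quadForm_eq_dotProduct, hMw, EuclideanSpace.inner_eq_star_dotProduct]
    simp
  have hcs : inner ℝ v w ≤ ‖v‖ * ‖w‖ := real_inner_le_norm v w
  have hlow : lam * ‖w‖ ^ 2 ≤ inner ℝ v w := hwMw ▸ hM_ge w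
  have hlw : lam * ‖w‖ ≤ ‖v‖ := by
    rcases (norm_nonneg w).eq_or_lt with hw | hw
    · rw [← hw, mul_zero]; exact norm_nonneg v
    · nlinarith
  rw [hvw, le_div_iff₀ hlam]
  nlinarith [norm_nonneg v]

lemma Matrix.PosDef.det_le_pow_of_quadForm_le {M : Matrix (Fin d) (Fin d) ℝ} (hM : M.PosDef)
    {Λ : ℝ} (hM_le : ∀ v : Ed d, quadForm M v ≤ Λ * ‖v‖ ^ 2) : M.det ≤ Λ ^ d := by
  have hH := hM.isHermitian
  have heig : ∀ i, hH.eigenvalues i ≤ Λ := fun i => by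
    have hnorm : ‖(hH.eigenvectorBasis i : Ed d)‖ = 1 := hH.eigenvectorBasis.orthonormal.1 i
    calc hH.eigenvalues i = quadForm M (hH.eigenvectorBasis i) := by
          rw [hH.eigenvalues_eq i, quadForm_eq_dotProduct]
          simp
      _ ≤ Λ := by simpa [hnorm] using hM_le (hH.eigenvectorBasis i)
  calc M.det = ∏ i, hH.eigenvalues i := by simpa using hH.det_eq_prod_eigenvalues
    _ ≤ ∏ _i : Fin d, Λ :=
        Finset.prod_le_prod (fun i _ => (hM.eigenvalues_pos i).le) (fun i _ => heig i)
    _ = Λ ^ d := by simp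

end QuadForm

section Proposal

variable {h : ℝ} {c : Ed d → Ed d} {G : Ed d → Matrix (Fin d) (Fin d) ℝ}

lemma le_mhq_of_det_le_of_quadForm_le (hh : 0 < h) {x y : Ed d} (hG : (G x).PosDef)
    {D M : ℝ} (hD : (G x).det ≤ D) (hM : quadForm (G x)⁻¹ (y - c x) ≤ M) :
    (2 * Real.pi * h) ^ (-(d : ℝ) / 2) * D ^ (-(1 : ℝ) / 2) * Real.exp (-M / (2 * h)) ≤
      mhq h c G x y := by
  have hdet_pos := hG.det_pos
  have hpow : D ^ (-(1 : ℝ) / 2) ≤ (G x).det ^ (-(1 : ℝ) / 2) :=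
    Real.rpow_le_rpow_of_nonpos hdet_pos hD (by norm_num)
  have hexp : Real.exp (-M / (2 * h)) ≤ Real.exp (-quadForm (G x)⁻¹ (y - c x) / (2 * h)) := by
    gcongr
  exact mul_le_mul (mul_le_mul_of_nonneg_left hpow (by positivity)) hexp (by positivity)
    (by positivity)

lemma exists_pos_forall_le_mhq (hh : 0 < h) (hGpd : ∀ x, (G x).PosDef)
    {G₁ G₂ : Matrix (Fin d) (Fin d) ℝ} (hG₁ : G₁.PosDef)
    (hG₁_le : ∀ x, LoewnerLE G₁ (G x)) (hle_G₂ : ∀ x, LoewnerLE (G x) G₂)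
    (hc : BddOnBounded c) {S : Set (Ed d)} (hS : Bornology.IsBounded S) :
    ∃ ε > 0, ∀ x ∈ S, ∀ y ∈ S, ε ≤ mhq h c G x y := by
  obtain ⟨R, hR⟩ := hS.exists_norm_le
  obtain ⟨K, hK⟩ := hc R
  obtain ⟨lam, hlam, hG₁_ge⟩ := hG₁.exists_pos_mul_norm_sq_le_quadForm
  set Λ := ∑ i, ∑ j, |G₂ i j|
  have hdet : ∀ x, (G x).det ≤ Λ ^ d := fun x => (hGpd x).det_le_pow_of_quadForm_le fun v =>
    ((hle_G₂ x).quadForm_le v).trans (quadForm_le_sum_abs_mul_norm_sq G₂ v)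
  have hΛd : 0 < Λ ^ d := (hGpd 0).det_pos.trans_le (hdet 0)
  have hquad : ∀ x ∈ S, ∀ y ∈ S, quadForm (G x)⁻¹ (y - c x) ≤ (R + K) ^ 2 / lam := by
    intro x hx y hy
    refine (quadForm_inv_le_norm_sq_div (hGpd x) hlam
      (fun v => (hG₁_ge v).trans ((hG₁_le x).quadForm_le v)) _).trans ?_
    have hyc : ‖y - c x‖ ≤ R + K := (norm_sub_le _ _).trans (add_le_add (hR y hy) (hK x (hR x hx)))
    gcongr
  refine ⟨_, by positivity, fun x hx y hy =>
    le_mhq_of_det_le_of_quadForm_le hh (hGpd x) (hdet x) (hquad x hx y hy)⟩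

end Proposal

section MetropolisHastings

variable {f : Ed d → ℝ} {q : Ed d → Ed d → ℝ}

lemma mhAccept_mul_eq_min {x y : Ed d} (hq : 0 < q x y) :
    mhAccept f q x y * q x y = min (q x y) (f y * q y x / f x) := by
  rw [mhAccept, min_mul_of_nonneg _ _ hq.le, one_mul]
  field_simp

lemma div_mul_le_mhAccept_mul {x y : Ed d} {ε u : ℝ} (hε : 0 < ε) (hfx : 0 < f x) (hfy : 0 ≤ f y)
    (hfxu : f x ≤ u) (hfyu : f y ≤ u) (hqxy : ε ≤ q x y) (hqyx : ε ≤ q y x) :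
    ε / u * f y ≤ mhAccept f q x y * q x y := by
  have hu : 0 < u := hfx.trans_le hfxu
  have hqyx_nonneg : 0 ≤ q y x := hε.le.trans hqyx
  rw [mhAccept_mul_eq_min (hε.trans_le hqxy)]
  refine le_min ?_ ?_
  · calc ε / u * f y ≤ ε / u * u := by gcongr
      _ = ε := div_mul_cancel₀ ε hu.ne'
      _ ≤ q x y := hqxy
  · calc ε / u * f y = f y * (ε / u) := mul_comm _ _
      _ ≤ f y * (q y x / f x) := by gcongr
      _ = f y * q y x / f x := (mul_div_assoc _ _ _).symm

lemma ofReal_mul_targetMeasure_le_mhKernel {x : Ed d} {a : ℝ} (ha : 0 ≤ a) {B : Set (Ed d)}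
    (hB : MeasurableSet B) (hfB : ∀ y ∈ B, a * f y ≤ mhAccept f q x y * q x y) :
    ENNReal.ofReal a * targetMeasure f B ≤ mhKernel f q x B :=
  calc ENNReal.ofReal a * targetMeasure f B
      = ∫⁻ y in B, ENNReal.ofReal (a * f y) := by
        rw [targetMeasure, withDensity_apply _ hB, ← lintegral_const_mul' _ _ ENNReal.ofReal_ne_top]
        simp_rw [ENNReal.ofReal_mul ha]
    _ ≤ ∫⁻ y in B, ENNReal.ofReal (mhAccept f q x y * q x y) :=
        setLIntegral_mono' hB fun y hy => ENNReal.ofReal_le_ofReal (hfB y hy)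
    _ ≤ mhKernel f q x B := by
        rw [mhKernel, Measure.add_apply, withDensity_apply _ hB]
        exact le_self_add

end MetropolisHastings

theorem compact_sets_small_general
    (d : ℕ) (h : ℝ) (hh : 0 < h)
    (f : Ed d → ℝ) (hfpos : ∀ x, 0 < f x)
    (c : Ed d → Ed d)
    (G : Ed d → Matrix (Fin d) (Fin d) ℝ)
    (hGpd : ∀ x, (G x).PosDef)
    (G₁ G₂ : Matrix (Fin d) (Fin d) ℝ) (hG₁ : G₁.PosDef)
    -- A1
    (hA1 : ∀ x, LoewnerLE G₁ (G x) ∧ LoewnerLE (G x) G₂)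
    -- A2
    (hA2 : BddOnBounded c)
    -- f bounded away from 0 and ∞ on compact sets
    (hfc : BddAwayOnCompacts f) :
    ∀ C : Set (Ed d), IsCompact C → C.Nonempty →
      ∃ ε u : ℝ, 0 < ε ∧ 0 < u ∧
        (∀ x ∈ C, ∀ y ∈ C, ε ≤ mhq h c G x y) ∧
        (∀ x ∈ C, f x ≤ u) ∧
        ∀ x ∈ C, ∀ B : Set (Ed d), B ⊆ C → MeasurableSet B →
          ENNReal.ofReal (ε / u) * targetMeasure f B ≤
            mhKernel f (mhq h c G) x B := by
  intro C hC ⟨x₀, hx₀⟩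
  obtain ⟨ε, hε, hq⟩ := exists_pos_forall_le_mhq hh hGpd hG₁ (fun x => (hA1 x).1)
    (fun x => (hA1 x).2) hA2 hC.isBounded
  obtain ⟨_, u, _, hf⟩ := hfc C hC
  have hfu : ∀ x ∈ C, f x ≤ u := fun x hx => (hf x hx).2
  have hu : 0 < u := (hfpos x₀).trans_le (hfu x₀ hx₀)
  refine ⟨ε, u, hε, hu, hq, hfu, fun x hx B hBC hB => ?_⟩
  refine ofReal_mul_targetMeasure_le_mhKernel (by positivity) hB fun y hy => ?_
  exact div_mul_le_mhAccept_mul hε (hfpos x) (hfpos y).le (hfu x hx) (hfu y (hBC hy))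
    (hq x hx y (hBC hy)) (hq y (hBC hy) x hx)

/-- Under A1 and A2, with the target bounded away from `0` and `∞` on compact sets,
every nonempty compact set is small for the MH kernel, with minorizing measure `F`
and minorizing constant `ε/u` where `ε` is a positive lower bound for `q` on `C × C`
and `u` an upper bound for `f` on `C`. -/
theorem compact_sets_small
    (d : ℕ) (h : ℝ) (hh : 0 < h)
    (f : Ed d → ℝ) (hfpos : ∀ x, 0 < f x) (hfmeas : Measurable f)
    (hfint : ∫ x, f x = 1)
    (c : Ed d → Ed d) (hcmeas : Measurable c)
    (G : Ed d → Matrix (Fin d) (Fin d) ℝ)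
    (hGmeas : ∀ i j, Measurable fun x => G x i j)
    (hGpd : ∀ x, (G x).PosDef)
    (G₁ G₂ : Matrix (Fin d) (Fin d) ℝ) (hG₁ : G₁.PosDef) (hG₂ : G₂.PosDef)
    -- A1
    (hA1 : ∀ x, LoewnerLE G₁ (G x) ∧ LoewnerLE (G x) G₂)
    -- A2
    (hA2 : BddOnBounded c)
    -- f bounded away from 0 and ∞ on compact sets
    (hfc : BddAwayOnCompacts f) :
    ∀ C : Set (Ed d), IsCompact C → C.Nonempty →
      ∃ ε u : ℝ, 0 < ε ∧ 0 < u ∧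
        (∀ x ∈ C, ∀ y ∈ C, ε ≤ mhq h c G x y) ∧
        (∀ x ∈ C, f x ≤ u) ∧
        ∀ x ∈ C, ∀ B : Set (Ed d), B ⊆ C → MeasurableSet B →
          ENNReal.ofReal (ε / u) * targetMeasure f B ≤
            mhKernel f (mhq h c G) x B :=
  compact_sets_small_general d h hh f hfpos c G hGpd G₁ G₂ hG₁ hA1 hA2 hfc

end
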